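/- Let P ⊂ R^d be a polytope with δB^d ⊆ P ⊆ B^d, δ ∈ (0,1). Let g be a log-concave function on R^d with g ≥ h pointwise and g(u) = h(u) for every vertex u of P, where h(x) = √(1−‖x‖²) on B^d and 0 outside. Then ∫_{R^d ∖ P°} g ≤ 2e·(d^{d+1}/δ^d)·∫_{R^d} h. -/

import Mathlib

open scoped RealInnerProductSpace
open MeasureTheory Real Set

/-- The polar of a set `X ⊆ ℝ^d`. -/
def polarSet {d : ℕ} (X : Set (EuclideanSpace ℝ (Fin d))) : Set (EuclideanSpace ℝ (Fin d)) :=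
  {y | ∀ x ∈ X, (⟪x, y⟫ : ℝ) ≤ 1}

-- purely real-arithmetic core of the contact bound
lemma contact_core (a A M eps T t Lb LT Lx Ly : ℝ)
    (hA : a ≤ A) (hA1 : 1 < A) (hM0 : 0 < M) (heps : 0 < eps)
    (hK : eps * (M + 2*A^2 + 1) = 1)
    (hT_def : T = 2*eps*A - eps^2*M)
    (ht0 : 0 < t) (hst : 1 - t = eps * t)
    (hLb : Lb ≤ 0) (hLT : T/(1+T) ≤ LT)
    (key : t * Ly + (1 - t) * Lx ≤ Lb / 2)
    (hLy : (Lb + LT) / 2 ≤ Ly) :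
    Lx ≤ 1 - a := by
  have hepsM : eps * M ≤ 1 := by nlinarith
  have hT0 : 0 < T := by nlinarith
  have h1T : (0:ℝ) < 1 + T := by linarith
  have h1 : t * ((Lb + LT) / 2) ≤ t * Ly := mul_le_mul_of_nonneg_left hLy ht0.le
  have h2 : (1 - t) * Lb ≤ 0 := by
    have h1t : 0 ≤ 1 - t := by nlinarith
    exact mul_nonpos_of_nonneg_of_nonpos h1t hLb
  have step1 : (1 - t) * Lx ≤ -(t/2) * LT := by nlinarith
  rw [hst] at step1
  have step2 : t * (eps * Lx) ≤ t * (-(LT)/2) := by nlinarith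
  have hepsL : eps * Lx ≤ -(LT)/2 := (mul_le_mul_iff_right₀ ht0).1 step2
  have hT_ineq : (a - 1) * (2*eps) * (1+T) ≤ T := by
    have expand : T - (A-1)*(2*eps)*(1+T)
        = 2*eps*(1 - eps*(M + 2*A^2 + 1)) + eps^2*(M + 2 + 4*A + 2*eps*M*(A-1)) := by
      rw [hT_def]; ring
    rw [hK] at expand
    have hpos : 0 ≤ eps^2*(M + 2 + 4*A + 2*eps*M*(A-1)) := by
      have h3 : (0:ℝ) ≤ 2*eps*M*(A-1) :=
        mul_nonneg (by positivity) (by linarith)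
      nlinarith
    have h4 : (a-1)*(2*eps)*(1+T) ≤ (A-1)*(2*eps)*(1+T) := by
      have h3 : (0:ℝ) ≤ (2*eps)*(1+T) := by positivity
      nlinarith
    nlinarith
  have h5 : (a-1) * (2*eps) ≤ T/(1+T) := by
    rw [le_div_iff₀ h1T]; linarith
  have h6 : (a-1) * (2*eps) ≤ LT := le_trans h5 hLT
  have h7 : eps * Lx ≤ eps * (1 - a) := by linarith
  exact (mul_le_mul_iff_right₀ heps).1 h7

lemma log_one_add_ge {T : ℝ} (hT : 0 < T) : T/(1+T) ≤ Real.log (1+T) := by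
  have h1T : (0:ℝ) < 1 + T := by linarith
  have hinv : (0:ℝ) < (1+T)⁻¹ := by positivity
  have h := Real.log_le_sub_one_of_pos hinv
  rw [Real.log_inv] at h
  have h2 : T/(1+T) = 1 - (1+T)⁻¹ := by field_simp; ring
  linarith

lemma contact_pointwise {d : ℕ} (g : EuclideanSpace ℝ (Fin d) → ℝ)
    (hg0 : ∀ x, 0 ≤ g x)
    (hlc : ∀ x y : EuclideanSpace ℝ (Fin d), ∀ t ∈ Set.Icc (0:ℝ) 1,
      g x ^ t * g y ^ (1 - t) ≤ g (t • x + (1 - t) • y))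
    (hgh : ∀ x, Real.sqrt (1 - ‖x‖ ^ 2) ≤ g x)
    (u x : EuclideanSpace ℝ (Fin d)) (hu1 : ‖u‖ ≤ 1)
    (hgu : g u = Real.sqrt (1 - ‖u‖ ^ 2))
    (ha : 1 < ⟪u, x⟫) :
    g x ≤ Real.exp (1 - ⟪u, x⟫) := by
  have hb0 : (0:ℝ) ≤ ‖u‖ ^ 2 := sq_nonneg _
  have hb1 : ‖u‖ ^ 2 ≤ 1 := by nlinarith [norm_nonneg u]
  have hux : u ≠ x := by
    rintro rfl
    rw [real_inner_self_eq_norm_sq] at ha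
    linarith
  have hm0 : 0 < ‖u - x‖ ^ 2 := by
    have h : u - x ≠ 0 := sub_ne_zero_of_ne hux
    have := norm_pos_iff.mpr h
    positivity
  obtain ⟨a, ha_def⟩ : ∃ a : ℝ, a = ⟪u, x⟫ := ⟨_, rfl⟩
  obtain ⟨b, hb_def⟩ : ∃ b : ℝ, b = ‖u‖ ^ 2 := ⟨_, rfl⟩
  obtain ⟨m, hm_def⟩ : ∃ m : ℝ, m = ‖u - x‖ ^ 2 := ⟨_, rfl⟩
  rw [← ha_def] at ha
  rw [← hb_def] at hb0 hb1
  rw [← hb_def] at hgu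
  rw [← hm_def] at hm0
  rw [← ha_def]
  -- norm of the auxiliary point
  have hnormy : ∀ ε : ℝ, 1 - ‖u + ε • (u - x)‖ ^ 2 = (1 - b) + 2*ε*(a - b) - ε^2*m := by
    intro ε
    have h1 : ‖u + ε • (u - x)‖ ^ 2 = ‖u‖ ^ 2 + 2 * ⟪u, ε • (u - x)⟫ + ‖ε • (u - x)‖ ^ 2 :=
      norm_add_sq_real u (ε • (u - x))
    have h2 : ⟪u, ε • (u - x)⟫ = ε * (b - a) := by
      rw [real_inner_smul_right, inner_sub_right, real_inner_self_eq_norm_sq,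
        hb_def, ha_def]
    have h3 : ‖ε • (u - x)‖ ^ 2 = ε ^ 2 * m := by
      rw [norm_smul, mul_pow, Real.norm_eq_abs, sq_abs, hm_def]
    rw [h1, h2, h3, hb_def]; ring
  -- application of log-concavity
  have happ : ∀ ε : ℝ, 0 < ε →
      g (u + ε • (u - x)) ^ (1/(1+ε)) * g x ^ (1 - 1/(1+ε)) ≤ g u := by
    intro ε hε
    have h1ε : (1:ℝ) + ε ≠ 0 := by positivity
    have h1ε' : (0:ℝ) < 1 + ε := by linarith
    have ht0 : (0:ℝ) ≤ 1/(1+ε) := by positivity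
    have ht1 : 1/(1+ε) ≤ (1:ℝ) := by
      rw [div_le_one h1ε']; linarith
    have hcomb : (1/(1+ε)) • (u + ε • (u - x)) + (1 - 1/(1+ε)) • x = u := by
      match_scalars <;> field_simp <;> ring
    have := hlc (u + ε • (u - x)) x (1/(1+ε)) ⟨ht0, ht1⟩
    rwa [hcomb] at this
  rcases lt_or_eq_of_le hb1 with hb | hb
  · -- main case b < 1
    have h1b : (0:ℝ) < 1 - b := by linarith
    obtain ⟨A, hA, hA1, hA''⟩ : ∃ A : ℝ, a ≤ A ∧ 1 < A ∧ (1 - b) * A = a - b :=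
      ⟨(a - b)/(1 - b), by rw [le_div_iff₀ h1b]; nlinarith, by rw [lt_div_iff₀ h1b]; nlinarith,
        by field_simp⟩
    obtain ⟨M, hM0, hM''⟩ : ∃ M : ℝ, 0 < M ∧ (1 - b) * M = m :=
      ⟨m/(1 - b), by positivity, by field_simp⟩
    obtain ⟨ε, hε, hεK⟩ : ∃ ε : ℝ, 0 < ε ∧ ε * (M + 2*A^2 + 1) = 1 :=
      ⟨1/(M + 2*A^2 + 1), by positivity, by field_simp⟩
    obtain ⟨T, hT_def⟩ : ∃ T : ℝ, T = 2*ε*A - ε^2*M := ⟨_, rfl⟩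
    have hεM : ε * M ≤ 1 := by nlinarith
    have hT0 : 0 < T := by nlinarith
    have h1T : (0:ℝ) < 1 + T := by linarith
    obtain ⟨y, hy_def⟩ : ∃ y : EuclideanSpace ℝ (Fin d), y = u + ε • (u - x) := ⟨_, rfl⟩
    have hy2 : 1 - ‖y‖ ^ 2 = (1 - b)*(1 + T) := by
      rw [hy_def, hnormy ε, hT_def]
      linear_combination (-(2*ε))*hA'' + ε^2*hM''
    have hy2pos : 0 < 1 - ‖y‖ ^ 2 := by rw [hy2]; exact mul_pos h1b h1T
    have hgy : 0 < g y := lt_of_lt_of_le (Real.sqrt_pos.2 hy2pos) (hgh y)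
    rcases (hg0 x).eq_or_lt with h0 | hgx
    · rw [← h0]; positivity
    obtain ⟨t, ht_def⟩ : ∃ t : ℝ, t = 1/(1+ε) := ⟨_, rfl⟩
    have h1ε : (0:ℝ) < 1 + ε := by linarith
    have ht0 : 0 < t := by rw [ht_def]; positivity
    have hst : 1 - t = ε * t := by rw [ht_def]; field_simp; ring
    have happ' : g y ^ t * g x ^ (1 - t) ≤ Real.sqrt (1 - b) := by
      have h := happ ε hε
      rw [hgu] at h
      rw [hy_def, ht_def]
      exact h
    have hlhs : 0 < g y ^ t * g x ^ (1 - t) :=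
      mul_pos (Real.rpow_pos_of_pos hgy _) (Real.rpow_pos_of_pos hgx _)
    have key : t * Real.log (g y) + (1 - t) * Real.log (g x) ≤ Real.log (1 - b) / 2 := by
      have h := Real.log_le_log hlhs happ'
      rwa [Real.log_mul (ne_of_gt (Real.rpow_pos_of_pos hgy _))
        (ne_of_gt (Real.rpow_pos_of_pos hgx _)), Real.log_rpow hgy, Real.log_rpow hgx,
        Real.log_sqrt h1b.le] at h
    have hloggy : (Real.log (1 - b) + Real.log (1 + T)) / 2 ≤ Real.log (g y) := by
      have h := Real.log_le_log (Real.sqrt_pos.2 hy2pos) (hgh y)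
      rwa [Real.log_sqrt hy2pos.le, hy2, Real.log_mul (ne_of_gt h1b) (ne_of_gt h1T)] at h
    have hlogb : Real.log (1 - b) ≤ 0 := Real.log_nonpos h1b.le (by linarith)
    have hfin : Real.log (g x) ≤ 1 - a :=
      contact_core a A M ε T t (Real.log (1-b)) (Real.log (1+T)) (Real.log (g x))
        (Real.log (g y)) hA hA1 hM0 hε hεK hT_def ht0 hst hlogb (log_one_add_ge hT0) key hloggy
    calc g x = Real.exp (Real.log (g x)) := (Real.exp_log hgx).symm
      _ ≤ Real.exp (1 - a) := Real.exp_le_exp.2 hfin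
  · -- boundary case b = 1
    obtain ⟨ε, hε, hεm⟩ : ∃ ε : ℝ, 0 < ε ∧ ε * m = a - 1 :=
      ⟨(a - 1)/m, div_pos (by linarith) hm0, by field_simp⟩
    obtain ⟨y, hy_def⟩ : ∃ y : EuclideanSpace ℝ (Fin d), y = u + ε • (u - x) := ⟨_, rfl⟩
    have hy2 : 1 - ‖y‖ ^ 2 = ε * (a - 1) := by
      rw [hy_def, hnormy ε, hb]
      linear_combination (-ε) * hεm
    have hy2pos : 0 < 1 - ‖y‖ ^ 2 := by rw [hy2]; exact mul_pos hε (by linarith)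
    have hgy : 0 < g y := lt_of_lt_of_le (Real.sqrt_pos.2 hy2pos) (hgh y)
    have hgu0 : g u = 0 := by
      rw [hgu, hb, sub_self, Real.sqrt_zero]
    have happ' : g y ^ (1/(1+ε)) * g x ^ (1 - 1/(1+ε)) ≤ 0 := by
      have h := happ ε hε
      rw [hgu0] at h
      rw [hy_def]
      exact h
    have hgx0 : g x = 0 := by
      by_contra h
      have hgx : 0 < g x := lt_of_le_of_ne (hg0 x) (Ne.symm h)
      have : 0 < g y ^ (1/(1+ε)) * g x ^ (1 - 1/(1+ε)) :=
        mul_pos (Real.rpow_pos_of_pos hgy _) (Real.rpow_pos_of_pos hgx _)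
      linarith
    rw [hgx0]; positivity

lemma exists_extreme_inner {d : ℕ} {δ : ℝ} (hδ0 : 0 < δ)
    {P : Set (EuclideanSpace ℝ (Fin d))}
    (hpoly : ∃ V : Finset (EuclideanSpace ℝ (Fin d)), P = convexHull ℝ (V : Set _))
    (h1 : Metric.closedBall 0 δ ⊆ P)
    {x : EuclideanSpace ℝ (Fin d)} (hx : x ∉ polarSet P) :
    ∃ u ∈ Set.extremePoints ℝ P, 1 < ⟪u, x⟫ ∧ δ * ‖x‖ ≤ ⟪u, x⟫ := by
  obtain ⟨V, hV⟩ := hpoly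
  have hPc : IsCompact P := hV ▸ V.finite_toSet.isCompact_convexHull ℝ
  have hPconv : Convex ℝ P := hV ▸ convex_convexHull ℝ _
  have hEfin : (P.extremePoints ℝ).Finite := by
    apply Set.Finite.subset V.finite_toSet
    rw [hV]
    exact extremePoints_convexHull_subset
  have hPE : P = convexHull ℝ (P.extremePoints ℝ) := by
    have hclosed : IsClosed (convexHull ℝ (P.extremePoints ℝ)) :=
      (hEfin.isCompact_convexHull ℝ).isClosed
    have h := closure_convexHull_extremePoints hPc hPconv
    rw [hclosed.closure_eq] at h
    exact h.symm
  obtain ⟨p, hp, hpx⟩ : ∃ p ∈ P, 1 < ⟪p, x⟫ := by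
    simp only [polarSet, Set.mem_setOf_eq, not_forall] at hx
    obtain ⟨p, hp, hpx⟩ := hx
    exact ⟨p, hp, by linarith [lt_of_not_ge hpx]⟩
  have hne : (P.extremePoints ℝ).Nonempty := by
    by_contra h
    rw [Set.not_nonempty_iff_eq_empty] at h
    rw [hPE, h, convexHull_empty] at hp
    exact hp
  obtain ⟨u, huE, humax⟩ := Set.exists_max_image _ (fun v => (⟪v, x⟫ : ℝ)) hEfin hne
  have hlin : IsLinearMap ℝ (fun v : EuclideanSpace ℝ (Fin d) => (⟪v, x⟫ : ℝ)) :=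
    ⟨fun a b => inner_add_left a b x, fun c a => real_inner_smul_left a x c⟩
  have hhalf : ∀ z ∈ P, (⟪z, x⟫ : ℝ) ≤ ⟪u, x⟫ := by
    intro z hz
    rw [hPE] at hz
    exact convexHull_min (fun v hv => humax v hv) (convex_halfSpace_le hlin _) hz
  have hux : 1 < (⟪u, x⟫ : ℝ) := lt_of_lt_of_le hpx (hhalf p hp)
  have hxne : x ≠ 0 := by
    rintro rfl
    rw [inner_zero_right] at hpx
    linarith
  have hxnorm : (0:ℝ) < ‖x‖ := norm_pos_iff.2 hxne
  have hzball : (δ/‖x‖) • x ∈ Metric.closedBall (0 : EuclideanSpace ℝ (Fin d)) δ := by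
    rw [Metric.mem_closedBall, dist_zero_right, norm_smul, Real.norm_eq_abs,
      abs_of_nonneg (by positivity : (0:ℝ) ≤ δ/‖x‖), div_mul_cancel₀ _ (ne_of_gt hxnorm)]
  have hzx : (⟪(δ/‖x‖) • x, x⟫ : ℝ) = δ * ‖x‖ := by
    rw [real_inner_smul_left, real_inner_self_eq_norm_sq]
    field_simp
  exact ⟨u, huE, hux, hzx ▸ hhalf _ (h1 hzball)⟩

lemma integrable_exp_abs_1d {c : ℝ} (hc : 0 < c) :
    Integrable (fun t : ℝ => Real.exp (-(c * |t|))) := by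
  have hIoi : IntegrableOn (fun t : ℝ => Real.exp (-c * t)) (Ioi (0:ℝ)) :=
    exp_neg_integrableOn_Ioi 0 hc
  have hIoi' : IntegrableOn (fun t : ℝ => Real.exp (-(c * |t|))) (Ioi (0:ℝ)) := by
    apply hIoi.congr_fun ?_ measurableSet_Ioi
    intro t ht
    show Real.exp (-c * t) = Real.exp (-(c * |t|))
    rw [abs_of_pos ht, neg_mul]
  have hIic : IntegrableOn (fun t : ℝ => Real.exp (-(c * |t|))) (Iic (0:ℝ)) := by
    rw [← Measure.map_neg_eq_self (volume : Measure ℝ)]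
    have m : MeasurableEmbedding fun x : ℝ => -x := (Homeomorph.neg ℝ).measurableEmbedding
    rw [m.integrableOn_map_iff]
    simp_rw [Function.comp_def, abs_neg, neg_preimage, neg_Iic, neg_zero]
    exact Iff.mpr integrableOn_Ici_iff_integrableOn_Ioi hIoi'
  rw [← integrableOn_univ, ← Set.Iic_union_Ioi (a := (0:ℝ))]
  exact hIic.union hIoi'

lemma integrable_exp_norm {d : ℕ} (hd : 0 < d) {c : ℝ} (hc : 0 < c) :
    Integrable (fun x : EuclideanSpace ℝ (Fin d) => Real.exp (-(c * ‖x‖))) := by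
  have hd' : (0:ℝ) < d := Nat.cast_pos.2 hd
  obtain ⟨c', hc', hcd⟩ : ∃ c' : ℝ, 0 < c' ∧ c' * d = c :=
    ⟨c / d, by positivity, by field_simp⟩
  have hprod : Integrable (fun y : Fin d → ℝ => ∏ i, Real.exp (-(c' * |y i|))) :=
    Integrable.fintype_prod (fun _ => integrable_exp_abs_1d hc')
  have hψ := EuclideanSpace.volume_preserving_symm_measurableEquiv_toLp (Fin d)
  have hG : Integrable (fun x : EuclideanSpace ℝ (Fin d) => ∏ i, Real.exp (-(c' * |x i|))) :=
    (hψ.integrable_comp_emb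
      (MeasurableEquiv.toLp 2 (Fin d → ℝ)).symm.measurableEmbedding).2 hprod
  apply hG.mono
  · exact (Real.continuous_exp.comp
      ((continuous_const.mul continuous_norm).neg)).aestronglyMeasurable
  · filter_upwards with x
    have hcoord : ∀ i, |x i| ≤ ‖x‖ := by
      intro i
      have h1 : (x i)^2 ≤ ∑ j, ‖x j‖^2 := by
        have := Finset.single_le_sum (f := fun j => ‖x j‖^2)
          (fun j _ => sq_nonneg _) (Finset.mem_univ i)
        simpa [Real.norm_eq_abs, sq_abs] using this
      have h2 : ‖x‖ = Real.sqrt (∑ j, ‖x j‖^2) := by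
        rw [EuclideanSpace.norm_eq]
      rw [h2, ← Real.sqrt_sq_eq_abs]
      exact Real.sqrt_le_sqrt h1
    have hsum : ∑ i, |x i| ≤ d * ‖x‖ := by
      calc ∑ i, |x i| ≤ ∑ _i : Fin d, ‖x‖ := Finset.sum_le_sum (fun i _ => hcoord i)
        _ = d * ‖x‖ := by simp [Finset.sum_const, nsmul_eq_mul]
    have hexp : Real.exp (-(c * ‖x‖)) ≤ ∏ i, Real.exp (-(c' * |x i|)) := by
      rw [← Real.exp_sum]
      apply Real.exp_le_exp.2
      have h3 : ∑ i, -(c' * |x i|) = -(c' * ∑ i, |x i|) := by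
        rw [Finset.mul_sum, ← Finset.sum_neg_distrib]
      rw [h3, neg_le_neg_iff]
      calc c' * ∑ i, |x i| ≤ c' * (d * ‖x‖) := by
            apply mul_le_mul_of_nonneg_left hsum hc'.le
        _ = c * ‖x‖ := by rw [← hcd]; ring
    rw [Real.norm_eq_abs, abs_of_pos (Real.exp_pos _), Real.norm_eq_abs]
    rw [abs_of_pos (by positivity)]
    exact hexp

lemma radial_exp_integral {d : ℕ} (hd : 0 < d) {δ : ℝ} (hδ : 0 < δ) :
    ∫ y in Ioi (0:ℝ), y^(d-1) * Real.exp (1 - δ*y)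
      = Real.exp 1 * ((1/δ)^d * (Nat.factorial (d-1))) := by
  have hcast : ((d:ℝ) - 1) = ((d - 1 : ℕ) : ℝ) := by
    have : (1:ℕ) ≤ d := hd
    push_cast [Nat.cast_sub this]
    ring
  have hcongr : ∀ y ∈ Ioi (0:ℝ), y^(d-1) * Real.exp (1 - δ*y)
      = Real.exp 1 * (y ^ ((d:ℝ) - 1) * Real.exp (-(δ*y))) := by
    intro y hy
    rw [hcast, Real.rpow_natCast]
    rw [show (1 - δ*y) = 1 + (-(δ*y)) by ring, Real.exp_add]
    ring
  rw [setIntegral_congr_fun measurableSet_Ioi hcongr, integral_const_mul,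
    integral_rpow_mul_exp_neg_mul_Ioi (by exact_mod_cast hd) hδ]
  congr 1
  rw [← Real.rpow_natCast (1/δ) d]
  congr 1
  have h2 : ((d - 1 : ℕ) : ℝ) + 1 = (d : ℝ) := by
    have : (1:ℕ) ≤ d := hd
    push_cast [Nat.cast_sub this]; ring
  rw [← h2, Real.Gamma_nat_eq_factorial]

lemma radial_sqrt_integral_lb {d : ℕ} (hd : 0 < d) :
    (2:ℝ)/(d*(d+2)) ≤ ∫ y in Ioi (0:ℝ), y^(d-1) * Real.sqrt (1 - y^2) := by
  have hφcont : Continuous (fun y : ℝ => y^(d-1) * Real.sqrt (1 - y^2)) := by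
    apply Continuous.mul (continuous_pow _)
    exact Real.continuous_sqrt.comp (by continuity)
  have hφIoc : IntegrableOn (fun y : ℝ => y^(d-1) * Real.sqrt (1 - y^2)) (Ioc (0:ℝ) 1) :=
    hφcont.integrableOn_Ioc
  have hφIoi1 : IntegrableOn (fun y : ℝ => y^(d-1) * Real.sqrt (1 - y^2)) (Ioi (1:ℝ)) := by
    rw [integrableOn_congr_fun (g := fun _ => (0:ℝ)) ?_ measurableSet_Ioi]
    · exact integrableOn_zero
    · intro y hy
      have : (1:ℝ) - y^2 ≤ 0 := by nlinarith [(mem_Ioi.1 hy : (1:ℝ) < y)]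
      show y^(d-1) * Real.sqrt (1 - y^2) = 0
      rw [Real.sqrt_eq_zero'.2 this, mul_zero]
  have hφIoi : IntegrableOn (fun y : ℝ => y^(d-1) * Real.sqrt (1 - y^2)) (Ioi (0:ℝ)) := by
    rw [show Ioi (0:ℝ) = Ioc 0 1 ∪ Ioi 1 from (Ioc_union_Ioi_eq_Ioi zero_le_one).symm]
    exact hφIoc.union hφIoi1
  have hmono1 : ∫ y in Ioc (0:ℝ) 1, y^(d-1) * Real.sqrt (1 - y^2)
      ≤ ∫ y in Ioi (0:ℝ), y^(d-1) * Real.sqrt (1 - y^2) := by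
    apply setIntegral_mono_set hφIoi
    · filter_upwards [ae_restrict_mem measurableSet_Ioi] with y hy
      exact mul_nonneg (pow_nonneg (le_of_lt hy) _) (Real.sqrt_nonneg _)
    · exact HasSubset.Subset.eventuallyLE Ioc_subset_Ioi_self
  have hmono2 : ∫ y in Ioc (0:ℝ) 1, y^(d-1) * (1 - y^2)
      ≤ ∫ y in Ioc (0:ℝ) 1, y^(d-1) * Real.sqrt (1 - y^2) := by
    apply setIntegral_mono_on
    · exact (by continuity : Continuous (fun y : ℝ => y^(d-1) * (1 - y^2))).integrableOn_Ioc
    · exact hφIoc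
    · exact measurableSet_Ioc
    · intro y hy
      obtain ⟨hy0, hy1⟩ := hy
      have ht0 : (0:ℝ) ≤ 1 - y^2 := by nlinarith
      have hs1 : Real.sqrt (1 - y^2) ≤ 1 := Real.sqrt_le_one.mpr (by nlinarith)
      have hkey : 1 - y^2 ≤ Real.sqrt (1 - y^2) := by
        nlinarith [Real.sq_sqrt ht0, Real.sqrt_nonneg (1 - y^2)]
      exact mul_le_mul_of_nonneg_left hkey (by positivity)
  have hval : ∫ y in Ioc (0:ℝ) 1, y^(d-1) * (1 - y^2) = 2/((d:ℝ)*((d:ℝ)+2)) := by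
    rw [← intervalIntegral.integral_of_le zero_le_one]
    have hd2 : d - 1 + 2 = d + 1 := by omega
    have hfun : ∀ y : ℝ, y^(d-1) * (1 - y^2) = y^(d-1) - y^(d+1) := by
      intro y
      rw [← hd2, pow_add]; ring
    simp_rw [hfun]
    rw [intervalIntegral.integral_sub (intervalIntegral.intervalIntegrable_pow _)
      (intervalIntegral.intervalIntegrable_pow _), integral_pow, integral_pow]
    have hdc : ((d:ℝ) - 1) + 1 = (d:ℝ) := by ring
    have hd1 : ((d - 1 : ℕ) : ℝ) = (d:ℝ) - 1 := by
      have : (1:ℕ) ≤ d := hd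
      push_cast [Nat.cast_sub this]; ring
    have hd0 : (0:ℝ) < (d:ℝ) := by exact_mod_cast hd
    rw [one_pow, one_pow]
    rw [show ((0:ℝ) ^ (d - 1 + 1) : ℝ) = 0 by
          exact zero_pow (by omega),
        show ((0:ℝ) ^ (d + 1 + 1) : ℝ) = 0 by
          exact zero_pow (by omega)]
    push_cast [hd1]
    field_simp [hd0.ne']
    ring
  calc (2:ℝ)/(d*(d+2)) = ∫ y in Ioc (0:ℝ) 1, y^(d-1) * (1 - y^2) := hval.symm
    _ ≤ _ := le_trans hmono2 hmono1

/-- Contact points yield a tail bound: if `g` is log-concave, lies above the height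
function `h(x) = √(1-‖x‖²)`, and touches it at every vertex of a polytope `P` with
`δB^d ⊆ P ⊆ B^d`, then `∫_{ℝ^d ∖ P°} g ≤ 2e·(d^{d+1}/δ^d)·∫_{ℝ^d} h`. -/
theorem contact_points_tail_bound (d : ℕ) (δ : ℝ) (hδ : δ ∈ Set.Ioo (0:ℝ) 1)
    (P : Set (EuclideanSpace ℝ (Fin d)))
    (hpoly : ∃ V : Finset (EuclideanSpace ℝ (Fin d)), P = convexHull ℝ (V : Set _))
    (h1 : Metric.closedBall 0 δ ⊆ P) (h2 : P ⊆ Metric.closedBall 0 1)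
    (g : EuclideanSpace ℝ (Fin d) → ℝ)
    (hg0 : ∀ x, 0 ≤ g x)
    (hlc : ∀ x y : EuclideanSpace ℝ (Fin d), ∀ t ∈ Set.Icc (0:ℝ) 1,
      g x ^ t * g y ^ (1 - t) ≤ g (t • x + (1 - t) • y))
    (hgh : ∀ x, Real.sqrt (1 - ‖x‖ ^ 2) ≤ g x)
    (hcontact : ∀ u ∈ Set.extremePoints ℝ P, g u = Real.sqrt (1 - ‖u‖ ^ 2)) :
    ∫⁻ x in (polarSet P)ᶜ, ENNReal.ofReal (g x) ≤
      ENNReal.ofReal (2 * Real.exp 1 * (d : ℝ) ^ (d + 1) / δ ^ d *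
        ∫ x : EuclideanSpace ℝ (Fin d), Real.sqrt (1 - ‖x‖ ^ 2)) := by
  obtain ⟨hδ0, hδ1⟩ := hδ
  rcases Nat.eq_zero_or_pos d with hd | hd
  · subst hd
    have hempty : (polarSet P)ᶜ = (∅ : Set (EuclideanSpace ℝ (Fin 0))) := by
      ext y
      simp only [Set.mem_compl_iff, Set.mem_empty_iff_false, iff_false, not_not]
      intro p hp
      have hp0 : p = 0 := Subsingleton.elim p 0
      rw [hp0, inner_zero_left]
      norm_num
    rw [hempty, Measure.restrict_empty, lintegral_zero_measure]
    exact bot_le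
  -- d ≥ 1
  haveI : Nonempty (Fin d) := ⟨⟨0, hd⟩⟩
  haveI : Nontrivial (EuclideanSpace ℝ (Fin d)) := by infer_instance
  -- pointwise bound on the complement of the polar
  have hbound : ∀ x ∈ (polarSet P)ᶜ, g x ≤ Real.exp (1 - δ * ‖x‖) := by
    intro x hx
    obtain ⟨u, huE, hu1, huδ⟩ := exists_extreme_inner hδ0 hpoly h1 hx
    have hunorm : ‖u‖ ≤ 1 := by
      have hmem : u ∈ P := extremePoints_subset huE
      have := h2 hmem
      rwa [Metric.mem_closedBall, dist_zero_right] at this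
    have hcp := contact_pointwise g hg0 hlc hgh u x hunorm (hcontact u huE) hu1
    calc g x ≤ Real.exp (1 - ⟪u, x⟫) := hcp
      _ ≤ Real.exp (1 - δ * ‖x‖) := Real.exp_le_exp.2 (by linarith)
  have hmeas : Measurable
      (fun x : EuclideanSpace ℝ (Fin d) => ENNReal.ofReal (Real.exp (1 - δ * ‖x‖))) :=
    (ENNReal.continuous_ofReal.comp (Real.continuous_exp.comp
      (continuous_const.sub (continuous_const.mul continuous_norm)))).measurable
  have hint : Integrable (fun x : EuclideanSpace ℝ (Fin d) => Real.exp (1 - δ * ‖x‖)) := by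
    have h0 := (integrable_exp_norm hd hδ0).const_mul (Real.exp 1)
    have heq : (fun x : EuclideanSpace ℝ (Fin d) => Real.exp (1 - δ * ‖x‖))
        = fun x => Real.exp 1 * Real.exp (-(δ * ‖x‖)) := by
      funext x
      rw [show (1 - δ * ‖x‖) = 1 + -(δ * ‖x‖) by ring, Real.exp_add]
    rw [heq]
    exact h0
  -- the radial decompositions
  obtain ⟨B, hB0, hB_def⟩ : ∃ B : ℝ, 0 ≤ B ∧
      B = (volume (Metric.ball (0 : EuclideanSpace ℝ (Fin d)) 1)).toReal :=
    ⟨_, ENNReal.toReal_nonneg, rfl⟩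
  have hrad1 : ∫ x : EuclideanSpace ℝ (Fin d), Real.exp (1 - δ * ‖x‖)
      = (d:ℝ) * (B * ∫ y in Ioi (0:ℝ), y^(d-1) * Real.exp (1 - δ * y)) := by
    have h := integral_fun_norm_addHaar (volume : Measure (EuclideanSpace ℝ (Fin d)))
      (fun y : ℝ => Real.exp (1 - δ * y))
    rw [finrank_euclideanSpace_fin] at h
    simp only [nsmul_eq_mul, smul_eq_mul] at h
    rw [h, hB_def]
    rfl
  have hrad2 : ∫ x : EuclideanSpace ℝ (Fin d), Real.sqrt (1 - ‖x‖ ^ 2)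
      = (d:ℝ) * (B * ∫ y in Ioi (0:ℝ), y^(d-1) * Real.sqrt (1 - y^2)) := by
    have h := integral_fun_norm_addHaar (volume : Measure (EuclideanSpace ℝ (Fin d)))
      (fun y : ℝ => Real.sqrt (1 - y^2))
    rw [finrank_euclideanSpace_fin] at h
    simp only [nsmul_eq_mul, smul_eq_mul] at h
    rw [h, hB_def]
    rfl
  -- the scalar inequality
  have hD1 : (1:ℝ) ≤ (d:ℝ) := by exact_mod_cast hd
  have hD0 : (0:ℝ) < (d:ℝ) := by linarith
  have key : ((d-1).factorial : ℝ) * ((d:ℝ)+2) ≤ 4*(d:ℝ)^d := by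
    have k1 : ((d-1).factorial : ℝ) ≤ (d:ℝ)^(d-1) := by
      have hn : (d-1).factorial ≤ (d-1)^(d-1) := Nat.factorial_le_pow _
      have hn2 : (d-1)^(d-1) ≤ d^(d-1) := Nat.pow_le_pow_left (Nat.sub_le d 1) _
      exact_mod_cast le_trans hn hn2
    have h3 : (d:ℝ)^(d-1) * (d:ℝ) = (d:ℝ)^d := by
      rw [← pow_succ]
      congr 1
      omega
    have k2 : (d:ℝ)^(d-1) * ((d:ℝ)+2) ≤ 4*(d:ℝ)^d := by
      nlinarith [pow_nonneg (by linarith : (0:ℝ) ≤ (d:ℝ)) (d-1)]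
    calc ((d-1).factorial : ℝ) * ((d:ℝ)+2) ≤ (d:ℝ)^(d-1) * ((d:ℝ)+2) :=
          mul_le_mul_of_nonneg_right k1 (by linarith)
      _ ≤ 4*(d:ℝ)^d := k2
  have hδd : (0:ℝ) < δ^d := by positivity
  have hs : Real.exp 1 * ((1/δ)^d * ((d-1).factorial : ℝ))
      ≤ 2*Real.exp 1*(d:ℝ)^(d+1)/δ^d * (2/((d:ℝ)*((d:ℝ)+2))) := by
    have h2' : ((1:ℝ)/δ)^d = 1/δ^d := by rw [div_pow, one_pow]
    rw [h2',
      show Real.exp 1 * (1/δ^d * ((d-1).factorial : ℝ))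
        = (Real.exp 1 * ((d-1).factorial : ℝ))/δ^d by ring,
      show 2*Real.exp 1*(d:ℝ)^(d+1)/δ^d * (2/((d:ℝ)*((d:ℝ)+2)))
        = (4*Real.exp 1*(d:ℝ)^(d+1))/(δ^d*((d:ℝ)*((d:ℝ)+2))) by
          rw [div_mul_div_comm]; congr 1; ring,
      div_le_div_iff₀ hδd (by positivity)]
    calc (Real.exp 1 * ((d-1).factorial : ℝ)) * (δ^d*((d:ℝ)*((d:ℝ)+2)))
        = (((d-1).factorial : ℝ)*((d:ℝ)+2)) * (Real.exp 1 * δ^d * (d:ℝ)) := by ring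
      _ ≤ (4*(d:ℝ)^d) * (Real.exp 1 * δ^d * (d:ℝ)) := by
          apply mul_le_mul_of_nonneg_right key
          positivity
      _ = (4*Real.exp 1*(d:ℝ)^(d+1))*δ^d := by rw [pow_succ]; ring
  -- the real integral inequality
  have hreal : ∫ x : EuclideanSpace ℝ (Fin d), Real.exp (1 - δ * ‖x‖)
      ≤ 2 * Real.exp 1 * (d:ℝ)^(d+1)/δ^d *
        ∫ x : EuclideanSpace ℝ (Fin d), Real.sqrt (1 - ‖x‖ ^ 2) := by
    calc ∫ x : EuclideanSpace ℝ (Fin d), Real.exp (1 - δ * ‖x‖)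
        = (d:ℝ) * (B * ∫ y in Ioi (0:ℝ), y^(d-1) * Real.exp (1 - δ * y)) := hrad1
      _ = ((d:ℝ)*B) * (Real.exp 1 * ((1/δ)^d * ((d-1).factorial : ℝ))) := by
          rw [radial_exp_integral hd hδ0]; ring
      _ ≤ ((d:ℝ)*B) * (2*Real.exp 1*(d:ℝ)^(d+1)/δ^d * (2/((d:ℝ)*((d:ℝ)+2)))) :=
          mul_le_mul_of_nonneg_left hs (by positivity)
      _ = (2*Real.exp 1*(d:ℝ)^(d+1)/δ^d) * ((d:ℝ)*(B*(2/((d:ℝ)*((d:ℝ)+2))))) := by ring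
      _ ≤ (2*Real.exp 1*(d:ℝ)^(d+1)/δ^d) *
            ((d:ℝ)*(B*∫ y in Ioi (0:ℝ), y^(d-1) * Real.sqrt (1 - y^2))) := by
          have hc : (0:ℝ) ≤ 2*Real.exp 1*(d:ℝ)^(d+1)/δ^d := by positivity
          apply mul_le_mul_of_nonneg_left ?_ hc
          apply mul_le_mul_of_nonneg_left ?_ hD0.le
          exact mul_le_mul_of_nonneg_left (radial_sqrt_integral_lb hd) hB0
      _ = 2 * Real.exp 1 * (d:ℝ)^(d+1)/δ^d *
            ∫ x : EuclideanSpace ℝ (Fin d), Real.sqrt (1 - ‖x‖ ^ 2) := by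
          rw [hrad2]
  -- put everything together
  calc ∫⁻ x in (polarSet P)ᶜ, ENNReal.ofReal (g x)
      ≤ ∫⁻ x in (polarSet P)ᶜ, ENNReal.ofReal (Real.exp (1 - δ * ‖x‖)) :=
        setLIntegral_mono hmeas (fun x hx => ENNReal.ofReal_le_ofReal (hbound x hx))
    _ ≤ ∫⁻ x, ENNReal.ofReal (Real.exp (1 - δ * ‖x‖)) := setLIntegral_le_lintegral _ _
    _ = ENNReal.ofReal (∫ x : EuclideanSpace ℝ (Fin d), Real.exp (1 - δ * ‖x‖)) :=
        (ofReal_integral_eq_lintegral_ofReal hint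
          (Filter.Eventually.of_forall fun x => (Real.exp_pos _).le)).symm
    _ ≤ ENNReal.ofReal (2 * Real.exp 1 * (d:ℝ)^(d+1)/δ^d *
          ∫ x : EuclideanSpace ℝ (Fin d), Real.sqrt (1 - ‖x‖ ^ 2)) :=
        ENNReal.ofReal_le_ofReal hreal
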